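/- arXiv:1301.1452 — 2 statements merged into one kernel-verified Lean document; each statement's English description precedes it below -/
import Mathlib

section
/- Let F1 be a finite field with |F1 \ {0}| = m. Then the independence number of the zero-divisor graph of the product ring F1 × ℤ/4ℤ equals max{2m, 3}. -/
/-- The zero-divisor graph `Γ(R)`: vertices are the nonzero zero-divisors of `R`,
with distinct vertices `x`, `y` adjacent iff `x * y = 0`. -/
def zdvGraph (R : Type*) [CommRing R] :
    SimpleGraph {x : R // x ≠ 0 ∧ ∃ y ≠ 0, x * y = 0} where
  Adj x y := x ≠ y ∧ (x : R) * y = 0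
  symm := ⟨fun x y ⟨hxy, h⟩ => ⟨hxy.symm, by rwa [mul_comm]⟩⟩
  loopless := ⟨fun x ⟨h, _⟩ => h rfl⟩

/-- The independence number of a simple graph: the maximum cardinality of a set of
pairwise non-adjacent vertices. -/
noncomputable def indepNum {V : Type*} (G : SimpleGraph V) : ℕ :=
  sSup {n | ∃ s : Finset V, (s : Set V).Pairwise (fun a b => ¬ G.Adj a b) ∧ s.card = n}

/-!
The nonzero zero-divisors of `F × ℤ/4ℤ` are the pairs `(a, 0)`, `(a, 2)` with `a ≠ 0` and
`(0, 1)`, `(0, 2)`, `(0, 3)`. The `2m` pairs with `a ≠ 0` multiply pairwise to pairs with nonzero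
first coordinate, and `1, 2, 3` multiply pairwise to nonzero elements of `ℤ/4ℤ`; this gives the
lower bound. Conversely `(a, c) * (0, b) = (0, c b)` vanishes unless `c = 2` and `b` is odd, so an
independent set meeting both halves lies in `{(a, 2)} ∪ {(0, 1), (0, 3)}` and has at most
`m + 2 ≤ max (2m) 3` elements.
-/

open Finset

section ZeroDivisorGraph

variable {R : Type*} [CommRing R]

lemma indepNum_eq_simpleGraph_indepNum {V : Type*} (G : SimpleGraph V) :
    indepNum G = G.indepNum := by
  simp only [indepNum, SimpleGraph.indepNum, SimpleGraph.isNIndepSet_iff, SimpleGraph.IsIndepSet]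

lemma isIndepSet_zdvGraph_iff (S : Set {x : R // x ≠ 0 ∧ ∃ y ≠ 0, x * y = 0}) :
    (zdvGraph R).IsIndepSet S ↔ (Subtype.val '' S).Pairwise (fun x y => x * y ≠ 0) := by
  rw [Subtype.val_injective.injOn.pairwise_image]
  simp +contextual [SimpleGraph.IsIndepSet, Set.Pairwise, zdvGraph]

theorem indepNum_zdvGraph_eq [Finite R] {n : ℕ}
    (hex : ∃ t : Finset R, (∀ x ∈ t, x ≠ 0 ∧ ∃ y ≠ 0, x * y = 0) ∧
      (t : Set R).Pairwise (fun x y => x * y ≠ 0) ∧ #t = n)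
    (hle : ∀ t : Finset R, (∀ x ∈ t, x ≠ 0 ∧ ∃ y ≠ 0, x * y = 0) →
      (t : Set R).Pairwise (fun x y => x * y ≠ 0) → #t ≤ n) :
    indepNum (zdvGraph R) = n := by
  rw [indepNum_eq_simpleGraph_indepNum]
  apply le_antisymm
  · obtain ⟨s, hs⟩ := (zdvGraph R).exists_isNIndepSet_indepNum
    rw [← hs.card_eq, ← card_map (Function.Embedding.subtype _)]
    refine hle _ (by simp +contextual) ?_
    rw [coe_map, Function.Embedding.coe_subtype, ← isIndepSet_zdvGraph_iff]
    exact hs.isIndepSet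
  · obtain ⟨t, hZ, ht, rfl⟩ := hex
    classical
    have hmap := subtype_map_of_mem (p := fun x : R => x ≠ 0 ∧ ∃ y ≠ 0, x * y = 0) hZ
    rw [← hmap, card_map]
    refine SimpleGraph.IsIndepSet.card_le_indepNum ?_
    rw [isIndepSet_zdvGraph_iff, ← Function.Embedding.coe_subtype, ← coe_map, hmap]
    exact ht

end ZeroDivisorGraph

section ProdZeroDivisors

variable {F R : Type*} [CommRing F] [CommRing R]

lemma prod_mk_zeroDivisor_iff_of_fst_ne_zero [NoZeroDivisors F] {a : F} (ha : a ≠ 0) (b : R) :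
    ((a, b) ≠ 0 ∧ ∃ y ≠ 0, (a, b) * y = 0) ↔ ∃ d ≠ 0, b * d = 0 := by
  constructor
  · rintro ⟨-, ⟨c, d⟩, hy, hxy⟩
    obtain ⟨hac, hbd⟩ := Prod.mk_eq_zero.mp hxy
    have hc : c = 0 := (mul_eq_zero.mp hac).resolve_left ha
    exact ⟨d, fun hd => hy (by simp [hc, hd]), hbd⟩
  · rintro ⟨d, hd, hbd⟩
    exact ⟨fun h => ha (Prod.mk_eq_zero.mp h).1, (0, d), fun h => hd (Prod.mk_eq_zero.mp h).2,
      by simp [hbd]⟩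

lemma prod_mk_zero_zeroDivisor [Nontrivial F] {b : R} (hb : b ≠ 0) :
    ((0 : F), b) ≠ 0 ∧ ∃ y ≠ 0, ((0 : F), b) * y = 0 :=
  ⟨fun h => hb (Prod.mk_eq_zero.mp h).2, (1, 0), by simp, by simp⟩

end ProdZeroDivisors

lemma zmod_four_exists_mul_eq_zero_iff :
    ∀ b : ZMod 4, (∃ d ≠ 0, b * d = 0) ↔ b ∈ ({0, 2} : Finset (ZMod 4)) := by
  decide

lemma zmod_four_ne_zero_iff :
    ∀ b : ZMod 4, b ≠ 0 ↔ b ∈ ({1, 2, 3} : Finset (ZMod 4)) := by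
  decide

lemma zmod_four_mul_ne_zero_of_ne :
    ∀ b d : ZMod 4, b ≠ 0 → d ≠ 0 → b ≠ d → b * d ≠ 0 := by
  decide

lemma zmod_four_eq_two_of_mul_ne_zero :
    ∀ b d : ZMod 4, b ∈ ({0, 2} : Finset (ZMod 4)) → d ≠ 0 → b * d ≠ 0 →
      b = 2 ∧ d ∈ ({1, 3} : Finset (ZMod 4)) := by
  decide

lemma exists_pairwise_mul_ne_zero_card_eq_three (R : Type*) [CommRing R] [Nontrivial R] :
    ∃ t : Finset (R × ZMod 4), (∀ x ∈ t, x ≠ 0 ∧ ∃ y ≠ 0, x * y = 0) ∧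
      (t : Set (R × ZMod 4)).Pairwise (fun x y => x * y ≠ 0) ∧ #t = 3 := by
  refine ⟨{0} ×ˢ {1, 2, 3}, ?_, ?_, rfl⟩
  · rintro ⟨a, b⟩ hab
    simp only [mem_product, mem_singleton] at hab
    rw [hab.1]
    exact prod_mk_zero_zeroDivisor ((zmod_four_ne_zero_iff b).mpr hab.2)
  · rintro ⟨a, b⟩ hx ⟨c, d⟩ hy hxy hmul
    simp only [coe_product, Set.mem_prod, coe_singleton, Set.mem_singleton_iff, mem_coe]
      at hx hy
    obtain ⟨rfl, hb⟩ := hx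
    obtain ⟨rfl, hd⟩ := hy
    exact zmod_four_mul_ne_zero_of_ne b d ((zmod_four_ne_zero_iff b).mpr hb)
      ((zmod_four_ne_zero_iff d).mpr hd) (fun h => hxy (h ▸ rfl))
      (congrArg Prod.snd hmul)

section ProdZModFour

variable {F : Type*} [CommRing F] [NoZeroDivisors F]

lemma snd_mem_of_zeroDivisor_of_fst_ne_zero {x : F × ZMod 4}
    (hx : x ≠ 0 ∧ ∃ y ≠ 0, x * y = 0) (hx₁ : x.1 ≠ 0) :
    x.2 ∈ ({0, 2} : Finset (ZMod 4)) :=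
  (zmod_four_exists_mul_eq_zero_iff _).mp
    ((prod_mk_zeroDivisor_iff_of_fst_ne_zero hx₁ x.2).mp hx)

lemma snd_eq_two_of_mul_ne_zero {x y : F × ZMod 4} (hx : x ≠ 0 ∧ ∃ z ≠ 0, x * z = 0)
    (hy : y ≠ 0) (hx₁ : x.1 ≠ 0) (hy₁ : y.1 = 0) (hxy : x * y ≠ 0) :
    x.2 = 2 ∧ y.2 ∈ ({1, 3} : Finset (ZMod 4)) :=
  zmod_four_eq_two_of_mul_ne_zero _ _ (snd_mem_of_zeroDivisor_of_fst_ne_zero hx hx₁)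
    (fun h => hy (Prod.ext hy₁ h)) fun h => hxy (Prod.ext (by simp [hy₁]) h)

variable [Fintype F] [DecidableEq F]

lemma exists_pairwise_mul_ne_zero_card_eq_two_mul :
    ∃ t : Finset (F × ZMod 4), (∀ x ∈ t, x ≠ 0 ∧ ∃ y ≠ 0, x * y = 0) ∧
      (t : Set (F × ZMod 4)).Pairwise (fun x y => x * y ≠ 0) ∧
      #t = 2 * #{a : F | a ≠ 0} := by
  refine ⟨({a | a ≠ 0} : Finset F) ×ˢ ({0, 2} : Finset (ZMod 4)), ?_, ?_, ?_⟩
  · rintro ⟨a, b⟩ hab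
    simp only [mem_product, mem_filter_univ] at hab
    exact (prod_mk_zeroDivisor_iff_of_fst_ne_zero hab.1 b).mpr
      ((zmod_four_exists_mul_eq_zero_iff b).mpr hab.2)
  · rintro x hx y hy - hxy
    simp only [coe_product, Set.mem_prod, coe_filter_univ] at hx hy
    exact mul_ne_zero hx.1 hy.1 (congrArg Prod.fst hxy)
  · rw [card_product, mul_comm]
    rfl

theorem card_le_of_pairwise_mul_ne_zero [Nontrivial F] (t : Finset (F × ZMod 4))
    (hZ : ∀ x ∈ t, x ≠ 0 ∧ ∃ y ≠ 0, x * y = 0)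
    (ht : (t : Set (F × ZMod 4)).Pairwise (fun x y => x * y ≠ 0)) :
    #t ≤ max (2 * #{a : F | a ≠ 0}) 3 := by
  set U : Finset F := {a | a ≠ 0}
  set t₀ := t.filter (·.1 = 0)
  set t₁ := t.filter (·.1 ≠ 0)
  have h₀ : t₀ ⊆ {0} ×ˢ {1, 2, 3} := fun x hx => by
    rw [mem_filter] at hx
    exact mem_product.mpr ⟨mem_singleton.mpr hx.2,
      (zmod_four_ne_zero_iff _).mp fun h => (hZ x hx.1).1 (Prod.ext hx.2 h)⟩
  have h₁ : t₁ ⊆ U ×ˢ {0, 2} := fun x hx => by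
    rw [mem_filter] at hx
    exact mem_product.mpr ⟨(mem_filter_univ _).mpr hx.2,
      snd_mem_of_zeroDivisor_of_fst_ne_zero (hZ x hx.1) hx.2⟩
  have mixed : ∀ x ∈ t₁, ∀ y ∈ t₀, x.2 = 2 ∧ y.2 ∈ ({1, 3} : Finset (ZMod 4)) := by
    intro x hx y hy
    rw [mem_filter] at hx hy
    exact snd_eq_two_of_mul_ne_zero (hZ x hx.1) (hZ y hy.1).1 hx.2 hy.2
      (ht hx.1 hy.1 fun h => hx.2 (h ▸ hy.2))
  have hcard : #t = #t₀ + #t₁ := (card_filter_add_card_filter_not _).symm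
  have hU : 1 ≤ #U := card_pos.mpr ⟨1, (mem_filter_univ _).mpr one_ne_zero⟩
  have h₀card : #t₀ ≤ 3 := (card_le_card h₀).trans_eq rfl
  have h₁card : #t₁ ≤ 2 * #U :=
    (card_le_card h₁).trans_eq (by rw [card_product, mul_comm]; rfl)
  rcases t₀.eq_empty_or_nonempty with h0 | ⟨y, hy⟩
  · rw [h0, card_empty] at hcard
    omega
  rcases t₁.eq_empty_or_nonempty with h1 | ⟨x, hx⟩
  · rw [h1, card_empty] at hcard
    omega
  have h₀' : t₀ ⊆ {0} ×ˢ {1, 3} := fun y hy =>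
    mem_product.mpr ⟨(mem_product.mp (h₀ hy)).1, (mixed x hx y hy).2⟩
  have h₁' : t₁ ⊆ U ×ˢ {2} := fun x hx =>
    mem_product.mpr ⟨(mem_product.mp (h₁ hx)).1, mem_singleton.mpr (mixed x hx y hy).1⟩
  have h₀card' : #t₀ ≤ 2 := (card_le_card h₀').trans_eq rfl
  have h₁card' : #t₁ ≤ #U :=
    (card_le_card h₁').trans_eq (by rw [card_product, card_singleton, mul_one])
  omega

end ProdZModFour

theorem stmt1 (F₁ : Type*) [Field F₁] [Finite F₁]
    (m : ℕ) (hm : Nat.card {x : F₁ // x ≠ 0} = m) :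
    indepNum (zdvGraph (F₁ × ZMod 4)) = max (2 * m) 3 := by
  classical
  have := Fintype.ofFinite F₁
  rw [Nat.card_eq_fintype_card, Fintype.card_subtype] at hm
  subst hm
  refine indepNum_zdvGraph_eq ?_ card_le_of_pairwise_mul_ne_zero
  rcases max_choice (2 * #{a : F₁ | a ≠ 0}) 3 with h | h <;> rw [h]
  · exact exists_pairwise_mul_ne_zero_card_eq_two_mul
  · exact exists_pairwise_mul_ne_zero_card_eq_three F₁
end

section
/- Let m be a composite natural number. If m = p² for some prime p, then the ideal-based zero-divisor graph Γ_{mℤ}(ℤ) of the ring ℤ with respect to the ideal mℤ is a complete graph and its independence number equals 1. Otherwise (m composite but not the square of a prime), Γ_{mℤ}(ℤ) has an infinite independent set, so its independence number is infinite. -/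
/-- The ideal-based zero-divisor graph `Γ_I(R)`: vertices are the elements
`x ∈ R \ I` such that `x * y ∈ I` for some `y ∈ R \ I`, with distinct vertices
`x`, `y` adjacent iff `x * y ∈ I`. -/
def idlGraph (R : Type*) [CommRing R] (I : Ideal R) :
    SimpleGraph {x : R // x ∉ I ∧ ∃ y ∉ I, x * y ∈ I} where
  Adj x y := x ≠ y ∧ (x : R) * y ∈ I
  symm := ⟨fun x y ⟨hxy, h⟩ => ⟨hxy.symm, by rwa [mul_comm]⟩⟩
  loopless := ⟨fun x ⟨h, _⟩ => h rfl⟩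

theorem indepNum_top {V : Type*} [Nonempty V] : indepNum (⊤ : SimpleGraph V) = 1 := by
  have hbound : ∀ n ∈ {n | ∃ s : Finset V,
      (s : Set V).Pairwise (fun a b => ¬ (⊤ : SimpleGraph V).Adj a b) ∧ s.card = n}, n ≤ 1 := by
    rintro n ⟨s, hs, rfl⟩
    exact Finset.card_le_one.mpr fun a ha b hb => by_contra fun hab => hs ha hb hab hab
  obtain ⟨v⟩ := ‹Nonempty V›
  have hone : 1 ∈ {n | ∃ s : Finset V,
      (s : Set V).Pairwise (fun a b => ¬ (⊤ : SimpleGraph V).Adj a b) ∧ s.card = n} :=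
    ⟨{v}, by simp, Finset.card_singleton v⟩
  exact le_antisymm (csSup_le ⟨1, hone⟩ hbound) (le_csSup ⟨1, hbound⟩ hone)

theorem Ideal.infinite_span_singleton {R : Type*} [CommRing R] [IsDomain R] [Infinite R]
    {a : R} (ha : a ≠ 0) : (Ideal.span {a} : Set R).Infinite :=
  Set.infinite_of_injective_forall_mem (mul_left_injective₀ ha)
    fun k => Ideal.mem_span_singleton.mpr (dvd_mul_left a k)

section IdealZeroDivisorGraph

variable {R : Type*} [CommRing R]

theorem exists_infinite_isIndepSet_idlGraph {I : Ideal R} (hI : (I : Set R).Infinite)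
    {a y : R} (hy : y ∉ I) (hay : a * y ∈ I) (haa : a * a ∉ I) :
    ∃ S : Set {x : R // x ∉ I ∧ ∃ y ∉ I, x * y ∈ I},
      S.Infinite ∧ (idlGraph R I).IsIndepSet S := by
  have hvert : ∀ i ∈ I, a + i ∉ I ∧ ∃ y ∉ I, (a + i) * y ∈ I := fun i hi =>
    ⟨fun h => haa (I.mul_mem_left a ((I.add_mem_iff_left hi).mp h)),
      y, hy, by rw [add_mul]; exact I.add_mem hay (I.mul_mem_right y hi)⟩
  let f : I → {x : R // x ∉ I ∧ ∃ y ∉ I, x * y ∈ I} := fun i => ⟨a + i, hvert i i.2⟩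
  have hf : Function.Injective f := fun i j hij =>
    Subtype.ext (add_left_cancel (congrArg Subtype.val hij))
  refine ⟨Set.range f, @Set.infinite_range_of_injective _ _ hI.to_subtype _ hf, ?_⟩
  rintro _ ⟨⟨i, hi⟩, rfl⟩ _ ⟨⟨j, hj⟩, rfl⟩ - ⟨-, hij⟩
  refine haa ?_
  rw [show a * a = (a + i) * (a + j) - (a * j + i * (a + j)) by ring]
  exact I.sub_mem hij (I.add_mem (I.mul_mem_left a hj) (I.mul_mem_right _ hi))

variable [IsDomain R] {p : R}

theorem Prime.dvd_of_mul_mem_span_sq (hp : Prime p) {x y : R}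
    (hy : y ∉ Ideal.span {p ^ 2}) (hxy : x * y ∈ Ideal.span {p ^ 2}) : p ∣ x := by
  rw [Ideal.mem_span_singleton] at hy hxy
  by_contra hpx
  exact hy (hp.pow_dvd_of_dvd_mul_left 2 hpx hxy)

theorem Prime.idlGraph_span_sq_eq_top (hp : Prime p) :
    idlGraph R (Ideal.span {p ^ 2}) = ⊤ := by
  ext ⟨x, -, y, hy, hxy⟩ ⟨x', -, y', hy', hxy'⟩
  refine ⟨fun h => h.1, fun hne => ⟨hne, Ideal.mem_span_singleton.mpr ?_⟩⟩
  show p ^ 2 ∣ x * x'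
  rw [sq]
  exact mul_dvd_mul (hp.dvd_of_mul_mem_span_sq hy hxy) (hp.dvd_of_mul_mem_span_sq hy' hxy')

theorem Prime.notMem_span_sq (hp : Prime p) : p ∉ Ideal.span {p ^ 2} := by
  rw [Ideal.mem_span_singleton]
  intro h
  have : 2 ≤ 1 := (pow_dvd_pow_iff hp.ne_zero hp.not_isUnit).mp (by rwa [pow_one])
  omega

theorem Prime.nonempty_vertex_idlGraph_span_sq (hp : Prime p) :
    Nonempty {x : R // x ∉ Ideal.span {p ^ 2} ∧
      ∃ y ∉ Ideal.span {p ^ 2}, x * y ∈ Ideal.span {p ^ 2}} :=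
  ⟨⟨p, hp.notMem_span_sq, p, hp.notMem_span_sq, by
    rw [← sq]; exact Ideal.mem_span_singleton_self _⟩⟩

end IdealZeroDivisorGraph

theorem Nat.not_dvd_minFac_sq {m : ℕ} (hm : m ≠ 1) (hnp : ¬ m.Prime)
    (hsq : ¬ ∃ p : ℕ, p.Prime ∧ m = p ^ 2) : ¬ m ∣ m.minFac ^ 2 := by
  intro h
  obtain ⟨i, hi, hmi⟩ := (Nat.dvd_prime_pow (Nat.minFac_prime hm)).mp h
  interval_cases i
  · exact hm (by simpa using hmi)
  · have hprime := Nat.minFac_prime hm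
    rw [pow_one] at hmi
    exact hnp (hmi ▸ hprime)
  · exact hsq ⟨_, Nat.minFac_prime hm, hmi⟩

theorem stmt17 (m : ℕ) (h2 : 2 ≤ m) (hnp : ¬ m.Prime) :
    (∀ p : ℕ, p.Prime → m = p ^ 2 →
      (∀ x y : {x : ℤ // x ∉ Ideal.span {(m : ℤ)} ∧
          ∃ y ∉ Ideal.span {(m : ℤ)}, x * y ∈ Ideal.span {(m : ℤ)}},
        x ≠ y → (idlGraph ℤ (Ideal.span {(m : ℤ)})).Adj x y) ∧
      indepNum (idlGraph ℤ (Ideal.span {(m : ℤ)})) = 1) ∧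
    ((¬ ∃ p : ℕ, p.Prime ∧ m = p ^ 2) →
      ∃ S : Set {x : ℤ // x ∉ Ideal.span {(m : ℤ)} ∧
          ∃ y ∉ Ideal.span {(m : ℤ)}, x * y ∈ Ideal.span {(m : ℤ)}},
        S.Infinite ∧ S.Pairwise fun a b => ¬ (idlGraph ℤ (Ideal.span {(m : ℤ)})).Adj a b) := by
  constructor
  · rintro p hp rfl
    have hpz : Prime (p : ℤ) := Nat.prime_iff_prime_int.mp hp
    rw [Nat.cast_pow, hpz.idlGraph_span_sq_eq_top]
    have := hpz.nonempty_vertex_idlGraph_span_sq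
    exact ⟨fun x y hxy => hxy, indepNum_top⟩
  · intro hsq
    have hm1 : m ≠ 1 := by omega
    have hm0 : (m : ℤ) ≠ 0 := by omega
    refine exists_infinite_isIndepSet_idlGraph (Ideal.infinite_span_singleton hm0)
      (a := (m.minFac : ℤ)) (y := ((m / m.minFac : ℕ) : ℤ)) ?_ ?_ ?_
    · rw [Ideal.mem_span_singleton, Int.natCast_dvd_natCast]
      exact Nat.not_dvd_of_pos_of_lt (Nat.div_pos (Nat.minFac_le (by omega)) m.minFac_pos)
        (Nat.div_lt_self (by omega) (Nat.minFac_prime hm1).one_lt)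
    · rw [← Nat.cast_mul, Nat.mul_div_cancel' m.minFac_dvd]
      exact Ideal.mem_span_singleton_self _
    · rw [Ideal.mem_span_singleton, ← Nat.cast_mul, Int.natCast_dvd_natCast, ← sq]
      exact Nat.not_dvd_minFac_sq hm1 hnp hsq
end
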